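/- (Robustness of contracting systems, scalar case) Suppose f : R × R → R satisfies ∂f/∂x(x,t) ≤ -β for all x, t, with β > 0, and R : R → R is bounded by D. If x solves ẋ = f(x,t) and y solves ẏ = f(y,t) + R(t), then for all t ≥ 0, |y(t) - x(t)| ≤ e^{-βt}|y(0) - x(0)| + D/β. -/

import Mathlib

/-!
Write `e = y - x`. Away from its zeros, `|e|` is differentiable with derivative
`sign e · (f(y,t) - f(x,t) + R)`, and the mean value theorem turns the bound `∂ₓf ≤ -β` into
`sign(y - x) · (f(y,t) - f(x,t)) ≤ -β |y - x|`; at a zero of `e` the right Dini derivative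
of `|e|` is at most `|R| ≤ D`. So `|e|` satisfies the differential inequality
`D⁺|e| ≤ -β |e| + D`, and Grönwall's comparison lemma (with the negative rate `-β`) gives
`|e(t)| ≤ e^{-βt} |e(0)| + D/β · (1 - e^{-βt})`.
-/

open Set Filter Topology

lemma sub_le_mul_sub_of_hasDerivAt_le {g g' : ℝ → ℝ} {C : ℝ} (hg : ∀ z, HasDerivAt g (g' z) z)
    (hg' : ∀ z, g' z ≤ C) {a b : ℝ} (hab : a ≤ b) : g b - g a ≤ C * (b - a) :=
  image_sub_le_mul_sub_of_deriv_le (fun z => (hg z).differentiableAt)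
    (fun z => (hg z).deriv ▸ hg' z) hab

lemma sign_sub_mul_sub_le_of_hasDerivAt_le {g g' : ℝ → ℝ} {β : ℝ}
    (hg : ∀ z, HasDerivAt g (g' z) z) (hg' : ∀ z, g' z ≤ -β) (a b : ℝ) :
    (SignType.sign (b - a) : ℝ) * (g b - g a) ≤ -β * |b - a| := by
  rcases lt_trichotomy a b with hab | rfl | hab
  · rw [sign_pos (sub_pos.2 hab), abs_of_pos (sub_pos.2 hab)]
    simpa using sub_le_mul_sub_of_hasDerivAt_le hg hg' hab.le
  · simp
  · rw [sign_neg (sub_neg.2 hab), abs_of_neg (sub_neg.2 hab)]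
    have := sub_le_mul_sub_of_hasDerivAt_le hg hg' hab.le
    rw [SignType.coe_neg_one]
    linarith

lemma sign_mul_le_abs (a b : ℝ) : (SignType.sign a : ℝ) * b ≤ |b| := by
  rcases lt_trichotomy a 0 with ha | rfl | ha
  · simpa [sign_neg ha] using neg_le_abs b
  · simp
  · simpa [sign_pos ha] using le_abs_self b

lemma frequently_slope_abs_lt {e : ℝ → ℝ} {e' s r : ℝ} (he : HasDerivAt e e' s) (hs : e s ≠ 0)
    (hr : (SignType.sign (e s) : ℝ) * e' < r) :
    ∃ᶠ z in 𝓝[>] s, (z - s)⁻¹ * (|e z| - |e s|) < r :=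
  ((hasDerivAt_abs hs).comp s he).hasDerivWithinAt.liminf_right_slope_le hr

theorem abs_le_gronwallBound_of_hasDerivAt {e e' : ℝ → ℝ} {K ε a b : ℝ}
    (he : ∀ s ∈ Icc a b, HasDerivAt e (e' s) s)
    (hsign : ∀ s ∈ Ico a b, e s ≠ 0 → (SignType.sign (e s) : ℝ) * e' s ≤ K * |e s| + ε)
    (hzero : ∀ s ∈ Ico a b, e s = 0 → |e' s| ≤ ε) :
    ∀ t ∈ Icc a b, |e t| ≤ gronwallBound |e a| K ε (t - a) := by
  refine le_gronwallBound_of_liminf_deriv_right_le (f' := fun s => K * |e s| + ε)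
    (fun s hs => (he s hs).continuousAt.continuousWithinAt.abs) ?_ le_rfl (fun _ _ => le_rfl)
  intro s hs r hr
  have hderiv := he s (Ico_subset_Icc_self hs)
  by_cases h0 : e s = 0
  · refine hderiv.hasDerivWithinAt.liminf_right_slope_norm_le ?_
    rw [Real.norm_eq_abs]
    simp only [h0, abs_zero, mul_zero, zero_add] at hr
    exact (hzero s hs h0).trans_lt hr
  · exact frequently_slope_abs_lt hderiv h0 ((hsign s hs h0).trans_lt hr)

lemma gronwallBound_neg_le {δ β ε : ℝ} (hβ : 0 < β) (hε : 0 ≤ ε) (t : ℝ) :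
    gronwallBound δ (-β) ε t ≤ δ * Real.exp (-β * t) + ε / β := by
  rw [gronwallBound_of_K_ne_0 (neg_ne_zero.2 hβ.ne'), div_neg]
  have hexp := Real.exp_pos (-β * t)
  have hεβ := div_nonneg hε hβ.le
  nlinarith

/-- Robustness of contracting scalar systems: a solution of the perturbed system
converges to a `D/β` neighborhood of the unperturbed solution. -/
theorem contraction_robustness (f f' : ℝ → ℝ → ℝ) (β D : ℝ) (hβ : 0 < β)
    (hf' : ∀ x t, HasDerivAt (fun x => f x t) (f' x t) x)
    (hcontr : ∀ x t, f' x t ≤ -β)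
    (R : ℝ → ℝ) (hR : ∀ t, |R t| ≤ D)
    (x y : ℝ → ℝ)
    (hx : ∀ t, HasDerivAt x (f (x t) t) t)
    (hy : ∀ t, HasDerivAt y (f (y t) t + R t) t) :
    ∀ t, 0 ≤ t → |y t - x t| ≤ Real.exp (-β * t) * |y 0 - x 0| + D / β := by
  intro t ht
  have hsign : ∀ s, (SignType.sign (y s - x s) : ℝ) * (f (y s) s + R s - f (x s) s)
      ≤ -β * |y s - x s| + D := fun s => by
    have hf := sign_sub_mul_sub_le_of_hasDerivAt_le (hf' · s) (hcontr · s) (x s) (y s)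
    have hRs := (sign_mul_le_abs (y s - x s) (R s)).trans (hR s)
    linarith
  have hzero : ∀ s, y s - x s = 0 → |f (y s) s + R s - f (x s) s| ≤ D := fun s hs => by
    rw [sub_eq_zero.1 hs, add_sub_cancel_left]
    exact hR s
  have key := abs_le_gronwallBound_of_hasDerivAt (e := fun s => y s - x s) (K := -β) (ε := D)
    (fun s _ => (hy s).sub (hx s)) (fun s _ _ => hsign s) (fun s _ => hzero s) t ⟨ht, le_rfl⟩
  rw [sub_zero] at key
  have hD : 0 ≤ D := (abs_nonneg _).trans (hR 0)
  linarith [gronwallBound_neg_le (δ := |y 0 - x 0|) hβ hD t]
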